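/- arXiv:2502.12119 — 5 statements merged into one kernel-verified Lean document; each statement's English description precedes it below -/
import Mathlib

section
/- Let V be a real inner product space, let μ ∈ V be nonzero, let 0 ≤ ε < 1, and let δᵢ, δⱼ ∈ V satisfy ‖δᵢ‖ ≤ ε‖μ‖ and ‖δⱼ‖ ≤ ε‖μ‖. Then μ + δᵢ and μ + δⱼ are nonzero, and the cosine similarity satisfies 0 ≤ 1 − cos(μ + δᵢ, μ + δⱼ) ≤ (4ε + 2ε²)/(1 − ε)². In particular, in an anisotropic representation space where the global drift μ dominates the sample-specific residuals, the cosine similarity of any two samples is forced toward 1. -/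
open RealInnerProductSpace

/-- Cosine similarity of two vectors in a real inner product space. -/
noncomputable def cosSim {V : Type*} [NormedAddCommGroup V] [InnerProductSpace ℝ V]
    (x y : V) : ℝ := ⟪x, y⟫ / (‖x‖ * ‖y‖)

theorem anisotropy_forces_cosine_near_one
    {V : Type*} [NormedAddCommGroup V] [InnerProductSpace ℝ V]
    (μ δi δj : V) (hμ : μ ≠ 0) (ε : ℝ) (hε0 : 0 ≤ ε) (hε1 : ε < 1)
    (hδi : ‖δi‖ ≤ ε * ‖μ‖) (hδj : ‖δj‖ ≤ ε * ‖μ‖) :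
    μ + δi ≠ 0 ∧ μ + δj ≠ 0 ∧
      0 ≤ 1 - cosSim (μ + δi) (μ + δj) ∧
      1 - cosSim (μ + δi) (μ + δj) ≤ (4 * ε + 2 * ε ^ 2) / (1 - ε) ^ 2 := by
  have hm0 : (0:ℝ) < ‖μ‖ := norm_pos_iff.mpr hμ
  set m := ‖μ‖ with hm
  have hi1 : m ≤ ‖μ + δi‖ + ‖δi‖ := by
    calc m = ‖(μ + δi) + (-δi)‖ := by rw [hm]; congr 1; abel
    _ ≤ ‖μ + δi‖ + ‖(-δi)‖ := norm_add_le _ _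
    _ = ‖μ + δi‖ + ‖δi‖ := by rw [norm_neg]
  have hj1 : m ≤ ‖μ + δj‖ + ‖δj‖ := by
    calc m = ‖(μ + δj) + (-δj)‖ := by rw [hm]; congr 1; abel
    _ ≤ ‖μ + δj‖ + ‖(-δj)‖ := norm_add_le _ _
    _ = ‖μ + δj‖ + ‖δj‖ := by rw [norm_neg]
  have hilo : (1 - ε) * m ≤ ‖μ + δi‖ := by nlinarith
  have hjlo : (1 - ε) * m ≤ ‖μ + δj‖ := by nlinarith
  have hipos : (0:ℝ) < ‖μ + δi‖ := lt_of_lt_of_le (by nlinarith) hilo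
  have hjpos : (0:ℝ) < ‖μ + δj‖ := lt_of_lt_of_le (by nlinarith) hjlo
  have hine : μ + δi ≠ 0 := norm_pos_iff.mp hipos
  have hjne : μ + δj ≠ 0 := norm_pos_iff.mp hjpos
  have hihi : ‖μ + δi‖ ≤ (1 + ε) * m := by
    have := norm_add_le μ δi; nlinarith
  have hjhi : ‖μ + δj‖ ≤ (1 + ε) * m := by
    have := norm_add_le μ δj; nlinarith
  set I := ⟪μ + δi, μ + δj⟫ with hI
  have hcs : I ≤ ‖μ + δi‖ * ‖μ + δj‖ := real_inner_le_norm _ _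
  have hexp : I = ⟪μ, μ⟫ + ⟪μ, δj⟫ + ⟪δi, μ⟫ + ⟪δi, δj⟫ := by
    rw [hI, inner_add_left, inner_add_right, inner_add_right]; ring
  have hmm : ⟪μ, μ⟫ = m ^ 2 := by
    rw [real_inner_self_eq_norm_sq, hm, sq]
  have b1 : |⟪μ, δj⟫| ≤ m * ‖δj‖ := abs_real_inner_le_norm _ _
  have b2 : |⟪δi, μ⟫| ≤ ‖δi‖ * m := abs_real_inner_le_norm _ _
  have b3 : |⟪δi, δj⟫| ≤ ‖δi‖ * ‖δj‖ := abs_real_inner_le_norm _ _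
  have b1' := abs_le.mp b1
  have b2' := abs_le.mp b2
  have b3' := abs_le.mp b3
  have hIlo : (1 - 2*ε - ε^2) * m^2 ≤ I := by
    rw [hexp, hmm]
    nlinarith [b1'.1, b2'.1, b3'.1, hδi, hδj, hm0,
      mul_nonneg (norm_nonneg δi) (norm_nonneg δj), norm_nonneg δi, norm_nonneg δj]
  have hprodpos : (0:ℝ) < ‖μ + δi‖ * ‖μ + δj‖ := mul_pos hipos hjpos
  have hnn : (0:ℝ) ≤ (1 - ε) * m := mul_nonneg (by linarith) hm0.le
  have hnn' : (0:ℝ) ≤ (1 + ε) * m := mul_nonneg (by linarith) hm0.le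
  have hprodlo : (1 - ε)^2 * m^2 ≤ ‖μ + δi‖ * ‖μ + δj‖ := by
    calc (1 - ε)^2 * m^2 = ((1 - ε) * m) * ((1 - ε) * m) := by ring
    _ ≤ ‖μ + δi‖ * ‖μ + δj‖ := mul_le_mul hilo hjlo hnn (norm_nonneg _)
  have hprodhi : ‖μ + δi‖ * ‖μ + δj‖ ≤ (1 + ε)^2 * m^2 := by
    calc ‖μ + δi‖ * ‖μ + δj‖ ≤ ((1 + ε) * m) * ((1 + ε) * m) :=
      mul_le_mul hihi hjhi (norm_nonneg _) hnn'
    _ = (1 + ε)^2 * m^2 := by ring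
  have hcos : cosSim (μ + δi) (μ + δj) = I / (‖μ + δi‖ * ‖μ + δj‖) := rfl
  clear_value I
  have hkey : 1 - cosSim (μ + δi) (μ + δj)
      = (‖μ + δi‖ * ‖μ + δj‖ - I) / (‖μ + δi‖ * ‖μ + δj‖) := by
    rw [hcos]; field_simp
  refine ⟨hine, hjne, ?_, ?_⟩
  · rw [hkey]
    exact div_nonneg (by linarith) (le_of_lt hprodpos)
  · rw [hkey]
    have h1 : (4 * ε + 2 * ε ^ 2) / (1 - ε) ^ 2
        = ((4 * ε + 2 * ε ^ 2) * m^2) / ((1 - ε) ^ 2 * m^2) := by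
      rw [mul_div_mul_right]
      positivity
    rw [h1]
    have hdpos : (0:ℝ) < (1 - ε)^2 * m^2 :=
      mul_pos (pow_pos (by linarith) 2) (pow_pos hm0 2)
    apply div_le_div₀ (by positivity) ?_ hdpos hprodlo
    have hring : (1+ε)^2*m^2 - (1-2*ε-ε^2)*m^2 = (4*ε+2*ε^2)*m^2 := by ring
    linarith [hprodhi, hIlo]
end

section
/- Let V be a real inner product space, let μ ∈ V be nonzero, let 0 ≤ ε < 1, and let δᵢ, δⱼ, δₖ ∈ V each have norm at most ε‖μ‖. Then the cosine similarities of the drifted representations are mutually indistinguishable up to order ε: |cos(μ + δᵢ, μ + δⱼ) − cos(μ + δᵢ, μ + δₖ)| ≤ (4ε + 2ε²)/(1 − ε)². Hence geometric dissimilarity measured by cosine similarity in the raw anisotropic space cannot separate distinct samples by more than this margin. -/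
set_option maxHeartbeats 1000000


open RealInnerProductSpace

lemma cosSim_bounds {V : Type*} [NormedAddCommGroup V] [InnerProductSpace ℝ V]
    (μ δ δ' : V) (hμ : μ ≠ 0) (ε : ℝ) (hε0 : 0 ≤ ε) (hε1 : ε < 1)
    (hδ : ‖δ‖ ≤ ε * ‖μ‖) (hδ' : ‖δ'‖ ≤ ε * ‖μ‖) :
    1 - (4 * ε + 2 * ε ^ 2) / (1 - ε) ^ 2 ≤ cosSim (μ + δ) (μ + δ') ∧
      cosSim (μ + δ) (μ + δ') ≤ 1 := by
  have hM : (0 : ℝ) < ‖μ‖ := norm_pos_iff.mpr hμ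
  set M := ‖μ‖ with hMdef
  have hx1 : (1 - ε) * M ≤ ‖μ + δ‖ := by
    have := norm_sub_le (μ + δ) δ
    simp only [add_sub_cancel_right] at this
    nlinarith
  have hx2 : ‖μ + δ‖ ≤ (1 + ε) * M := by
    have := norm_add_le μ δ
    nlinarith
  have hy1 : (1 - ε) * M ≤ ‖μ + δ'‖ := by
    have := norm_sub_le (μ + δ') δ'
    simp only [add_sub_cancel_right] at this
    nlinarith
  have hy2 : ‖μ + δ'‖ ≤ (1 + ε) * M := by
    have := norm_add_le μ δ'
    nlinarith
  have hxpos : 0 < ‖μ + δ‖ := lt_of_lt_of_le (by nlinarith) hx1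
  have hypos : 0 < ‖μ + δ'‖ := lt_of_lt_of_le (by nlinarith) hy1
  have hDpos : 0 < ‖μ + δ‖ * ‖μ + δ'‖ := mul_pos hxpos hypos
  -- inner product expansion and bounds
  have hinner : ⟪μ + δ, μ + δ'⟫ = ⟪μ, μ⟫ + ⟪μ, δ'⟫ + ⟪δ, μ⟫ + ⟪δ, δ'⟫ := by
    simp [inner_add_left, inner_add_right]; ring
  have hμμ : ⟪μ, μ⟫ = M ^ 2 := by
    rw [real_inner_self_eq_norm_sq]
  have h1 : |⟪μ, δ'⟫| ≤ M * (ε * M) := by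
    have := abs_real_inner_le_norm μ δ'
    nlinarith [norm_nonneg δ']
  have h2 : |⟪δ, μ⟫| ≤ (ε * M) * M := by
    have := abs_real_inner_le_norm δ μ
    nlinarith [norm_nonneg δ]
  have h3 : |⟪δ, δ'⟫| ≤ (ε * M) * (ε * M) := by
    have := abs_real_inner_le_norm δ δ'
    nlinarith [norm_nonneg δ, norm_nonneg δ']
  have ha : (1 - 2 * ε - ε ^ 2) * M ^ 2 ≤ ⟪μ + δ, μ + δ'⟫ := by
    rw [hinner, hμμ]
    have e1 := neg_abs_le ⟪μ, δ'⟫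
    have e2 := neg_abs_le ⟪δ, μ⟫
    have e3 := neg_abs_le ⟪δ, δ'⟫
    nlinarith
  have hCS : ⟪μ + δ, μ + δ'⟫ ≤ ‖μ + δ‖ * ‖μ + δ'‖ := real_inner_le_norm _ _
  constructor
  · -- lower bound: 1 - cos ≤ B
    have key : 1 - cosSim (μ + δ) (μ + δ') ≤ (4 * ε + 2 * ε ^ 2) / (1 - ε) ^ 2 := by
      have hrw : 1 - cosSim (μ + δ) (μ + δ') =
          (‖μ + δ‖ * ‖μ + δ'‖ - ⟪μ + δ, μ + δ'⟫) / (‖μ + δ‖ * ‖μ + δ'‖) := by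
        unfold cosSim
        field_simp
      rw [hrw]
      have hB : (4 * ε + 2 * ε ^ 2) / (1 - ε) ^ 2 =
          ((4 * ε + 2 * ε ^ 2) * M ^ 2) / ((1 - ε) ^ 2 * M ^ 2) := by
        rw [mul_div_mul_right _ _ (pow_ne_zero 2 hM.ne')]
      rw [hB]
      apply div_le_div₀ (by nlinarith) ?_ (mul_pos (pow_pos (by linarith) 2) (pow_pos hM 2)) ?_
      · have hD : ‖μ + δ‖ * ‖μ + δ'‖ ≤ (1 + ε) ^ 2 * M ^ 2 := by
          have := mul_le_mul hx2 hy2 hypos.le (mul_nonneg (by linarith) hM.le)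
          nlinarith
        nlinarith
      · have := mul_le_mul hx1 hy1 (mul_nonneg (by linarith) hM.le) hxpos.le
        nlinarith
    linarith
  · unfold cosSim
    rw [div_le_one hDpos]
    exact hCS

theorem raw_cosine_cannot_separate_samples
    {V : Type*} [NormedAddCommGroup V] [InnerProductSpace ℝ V]
    (μ δi δj δk : V) (hμ : μ ≠ 0) (ε : ℝ) (hε0 : 0 ≤ ε) (hε1 : ε < 1)
    (hδi : ‖δi‖ ≤ ε * ‖μ‖) (hδj : ‖δj‖ ≤ ε * ‖μ‖) (hδk : ‖δk‖ ≤ ε * ‖μ‖) :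
    |cosSim (μ + δi) (μ + δj) - cosSim (μ + δi) (μ + δk)| ≤
      (4 * ε + 2 * ε ^ 2) / (1 - ε) ^ 2 := by
  obtain ⟨h1l, h1u⟩ := cosSim_bounds μ δi δj hμ ε hε0 hε1 hδi hδj
  obtain ⟨h2l, h2u⟩ := cosSim_bounds μ δi δk hμ ε hε0 hε1 hδi hδk
  rw [abs_le]
  constructor <;> linarith
end

section
/- Let V be a real inner product space of dimension at least 3, let μ ∈ V be nonzero, let 0 < ε < 1, and let t ∈ [−1, 1]. Then there exist δᵢ, δⱼ ∈ V orthogonal to μ with ‖δᵢ‖ = ‖δⱼ‖ = ε‖μ‖ such that the true semantic similarity equals t, i.e. cos(δᵢ, δⱼ) = t, while the cosine similarity of the drifted representations equals (1 + t·ε²)/(1 + ε²), and in particular cos(μ + δᵢ, μ + δⱼ) ≥ 1 − 2ε². Hence arbitrary semantic dissimilarity (including cos(δᵢ, δⱼ) = −1) is masked by the global drift, which inflates the observed cosine similarity to near 1. -/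
open RealInnerProductSpace

private lemma aux_exists_ortho {V : Type*} [NormedAddCommGroup V] [InnerProductSpace ℝ V]
    (hdim : (3 : Cardinal) ≤ Module.rank ℝ V)
    (s : Set V) (hs : s.Finite) (hcard : (Cardinal.mk s) < 3) :
    ∃ v ∈ (Submodule.span ℝ s)ᗮ, v ≠ 0 := by
  haveI : FiniteDimensional ℝ (Submodule.span ℝ s) := FiniteDimensional.span_of_finite ℝ hs
  rw [← Submodule.ne_bot_iff]
  intro h
  rw [Submodule.orthogonal_eq_bot_iff] at h
  have h1 : Module.rank ℝ V < 3 := by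
    have := rank_span_le (R := ℝ) s
    rw [h, rank_top] at this
    exact lt_of_le_of_lt this hcard
  exact absurd hdim (not_le.mpr h1)

private lemma aux_norm_eq {V : Type*} [NormedAddCommGroup V] [InnerProductSpace ℝ V]
    {x : V} {a : ℝ} (ha : 0 ≤ a) (h : ⟪x, x⟫ = a ^ 2) : ‖x‖ = a := by
  have h1 : ‖x‖ = Real.sqrt ⟪x, x⟫ := by
    rw [real_inner_self_eq_norm_sq, Real.sqrt_sq (norm_nonneg x)]
  rw [h1, h, Real.sqrt_sq ha]

private lemma aux_orthonormal_pair {V : Type*} [NormedAddCommGroup V] [InnerProductSpace ℝ V]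
    (hdim : (3 : Cardinal) ≤ Module.rank ℝ V) (μ : V) :
    ∃ u1 u2 : V, ⟪u1, u1⟫ = 1 ∧ ⟪u2, u2⟫ = 1 ∧ ⟪u1, u2⟫ = 0 ∧
      ⟪μ, u1⟫ = 0 ∧ ⟪μ, u2⟫ = 0 := by
  obtain ⟨e1, he1mem, he1ne⟩ := aux_exists_ortho hdim {μ} (Set.finite_singleton μ)
    (by rw [Cardinal.mk_singleton]; norm_num)
  have hμe1 : ⟪μ, e1⟫ = 0 :=
    he1mem μ (Submodule.subset_span (Set.mem_singleton μ))
  obtain ⟨e2, he2mem, he2ne⟩ := aux_exists_ortho hdim {μ, e1}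
    ((Set.finite_singleton e1).insert μ)
    (by
      calc (Cardinal.mk ({μ, e1} : Set V)) ≤ Cardinal.mk ({e1} : Set V) + 1 :=
            Cardinal.mk_insert_le
        _ ≤ 1 + 1 := by rw [Cardinal.mk_singleton]
        _ < 3 := by norm_num)
  have hμe2 : ⟪μ, e2⟫ = 0 :=
    he2mem μ (Submodule.subset_span (by left; rfl))
  have he1e2 : ⟪e1, e2⟫ = 0 :=
    he2mem e1 (Submodule.subset_span (by right; rfl))
  have hne1 : ‖e1‖ ≠ 0 := norm_ne_zero_iff.mpr he1ne
  have hne2 : ‖e2‖ ≠ 0 := norm_ne_zero_iff.mpr he2ne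
  refine ⟨‖e1‖⁻¹ • e1, ‖e2‖⁻¹ • e2, ?_, ?_, ?_, ?_, ?_⟩
  · rw [real_inner_smul_left, real_inner_smul_right, real_inner_self_eq_norm_sq]
    field_simp
  · rw [real_inner_smul_left, real_inner_smul_right, real_inner_self_eq_norm_sq]
    field_simp
  · rw [real_inner_smul_left, real_inner_smul_right, he1e2]; ring
  · rw [real_inner_smul_right, hμe1]; ring
  · rw [real_inner_smul_right, hμe2]; ring

theorem drift_masks_arbitrary_semantic_dissimilarity
    {V : Type*} [NormedAddCommGroup V] [InnerProductSpace ℝ V]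
    (hdim : (3 : Cardinal) ≤ Module.rank ℝ V)
    (μ : V) (hμ : μ ≠ 0) (ε : ℝ) (hε0 : 0 < ε) (hε1 : ε < 1)
    (t : ℝ) (ht : t ∈ Set.Icc (-1 : ℝ) 1) :
    ∃ δi δj : V,
      ⟪μ, δi⟫ = 0 ∧ ⟪μ, δj⟫ = 0 ∧
      ‖δi‖ = ε * ‖μ‖ ∧ ‖δj‖ = ε * ‖μ‖ ∧
      cosSim δi δj = t ∧
      cosSim (μ + δi) (μ + δj) = (1 + t * ε ^ 2) / (1 + ε ^ 2) ∧
      1 - 2 * ε ^ 2 ≤ cosSim (μ + δi) (μ + δj) := by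
  obtain ⟨u1, u2, hu11, hu22, hu12, hμu1, hμu2⟩ := aux_orthonormal_pair hdim μ
  have hu21 : ⟪u2, u1⟫ = 0 := by rw [real_inner_comm]; exact hu12
  have h1μu1 : ⟪u1, μ⟫ = 0 := by rw [real_inner_comm]; exact hμu1
  have h1μu2 : ⟪u2, μ⟫ = 0 := by rw [real_inner_comm]; exact hμu2
  have hm : 0 < ‖μ‖ := norm_pos_iff.mpr hμ
  have ha : 0 < ε * ‖μ‖ := mul_pos hε0 hm
  have ht2 : (0 : ℝ) ≤ 1 - t ^ 2 := by nlinarith [ht.1, ht.2]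
  obtain ⟨s, hs0, hs2⟩ : ∃ s : ℝ, 0 ≤ s ∧ s ^ 2 = 1 - t ^ 2 :=
    ⟨Real.sqrt (1 - t ^ 2), Real.sqrt_nonneg _, Real.sq_sqrt ht2⟩
  obtain ⟨r, hr, hr2⟩ : ∃ r : ℝ, 0 < r ∧ r ^ 2 = 1 + ε ^ 2 :=
    ⟨Real.sqrt (1 + ε ^ 2), Real.sqrt_pos.mpr (by positivity), Real.sq_sqrt (by positivity)⟩
  have hμi : ⟪μ, (ε * ‖μ‖) • u1⟫ = 0 := by
    simp only [real_inner_smul_right, hμu1]; ring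
  have hμj : ⟪μ, (ε * ‖μ‖ * t) • u1 + (ε * ‖μ‖ * s) • u2⟫ = 0 := by
    simp only [inner_add_right, real_inner_smul_right, hμu1, hμu2]; ring
  have hni : ‖(ε * ‖μ‖) • u1‖ = ε * ‖μ‖ := by
    apply aux_norm_eq ha.le
    simp only [real_inner_smul_left, real_inner_smul_right, hu11]; ring
  have hnj : ‖(ε * ‖μ‖ * t) • u1 + (ε * ‖μ‖ * s) • u2‖ = ε * ‖μ‖ := by
    apply aux_norm_eq ha.le
    simp only [inner_add_left, inner_add_right, real_inner_smul_left, real_inner_smul_right,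
      hu11, hu22, hu12, hu21]
    linear_combination (ε * ‖μ‖) ^ 2 * hs2
  have hij : ⟪(ε * ‖μ‖) • u1, (ε * ‖μ‖ * t) • u1 + (ε * ‖μ‖ * s) • u2⟫
      = (ε * ‖μ‖) ^ 2 * t := by
    simp only [inner_add_right, real_inner_smul_left, real_inner_smul_right, hu11, hu12]
    ring
  have hnμi : ‖μ + (ε * ‖μ‖) • u1‖ = ‖μ‖ * r := by
    apply aux_norm_eq (by positivity)
    simp only [inner_add_left, inner_add_right, real_inner_smul_left, real_inner_smul_right,
      hu11, hμu1, h1μu1]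
    rw [real_inner_self_eq_norm_sq]
    linear_combination (-‖μ‖ ^ 2) * hr2
  have hnμj : ‖μ + ((ε * ‖μ‖ * t) • u1 + (ε * ‖μ‖ * s) • u2)‖ = ‖μ‖ * r := by
    apply aux_norm_eq (by positivity)
    simp only [inner_add_left, inner_add_right, real_inner_smul_left, real_inner_smul_right,
      hu11, hu22, hu12, hu21, hμu1, hμu2, h1μu1, h1μu2]
    rw [real_inner_self_eq_norm_sq]
    linear_combination (-‖μ‖ ^ 2) * hr2 + (ε * ‖μ‖) ^ 2 * hs2
  have hcosμ : ⟪μ + (ε * ‖μ‖) • u1, μ + ((ε * ‖μ‖ * t) • u1 + (ε * ‖μ‖ * s) • u2)⟫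
      = ‖μ‖ ^ 2 * (1 + t * ε ^ 2) := by
    simp only [inner_add_left, inner_add_right, real_inner_smul_left, real_inner_smul_right,
      hu11, hu22, hu12, hu21, hμu1, hμu2, h1μu1, h1μu2]
    rw [real_inner_self_eq_norm_sq]
    ring
  have hrr : ‖μ‖ * r * (‖μ‖ * r) = ‖μ‖ ^ 2 * (1 + ε ^ 2) := by
    linear_combination ‖μ‖ ^ 2 * hr2
  have hcos2 : cosSim (μ + (ε * ‖μ‖) • u1)
      (μ + ((ε * ‖μ‖ * t) • u1 + (ε * ‖μ‖ * s) • u2))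
      = (1 + t * ε ^ 2) / (1 + ε ^ 2) := by
    rw [cosSim, hcosμ, hnμi, hnμj, hrr,
      mul_div_mul_left _ _ (by positivity : ‖μ‖ ^ 2 ≠ 0)]
  refine ⟨(ε * ‖μ‖) • u1, (ε * ‖μ‖ * t) • u1 + (ε * ‖μ‖ * s) • u2,
    hμi, hμj, hni, hnj, ?_, hcos2, ?_⟩
  · rw [cosSim, hij, hni, hnj]
    field_simp
  · rw [hcos2, le_div_iff₀ (by positivity)]
    nlinarith [mul_le_mul_of_nonneg_right ht.1 (sq_nonneg ε), sq_nonneg (ε ^ 2)]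
end

section
/- Let V be a real inner product space, let μ ∈ V be nonzero, let 0 ≤ ε ≤ 1, and let δᵢ, δⱼ ∈ V be orthogonal to μ with ‖δᵢ‖ ≤ ε‖μ‖ and ‖δⱼ‖ ≤ ε‖μ‖. Then the cosine similarity of the drifted representations admits the second-order approximation |cos(μ + δᵢ, μ + δⱼ) − (1 − ‖δᵢ − δⱼ‖²/(2‖μ‖²))| ≤ 10·ε⁴. That is, cos(μ + δᵢ, μ + δⱼ) ≈ 1 − (1/2)‖δᵢ/‖μ‖ − δⱼ/‖μ‖‖² with error of fourth order in ε. -/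
open RealInnerProductSpace

set_option maxHeartbeats 1000000

private lemma aux_e2 (m a b c : ℝ) (hm : 0 < m) (hc : 0 < c)
    (hc2 : c ^ 2 = (m ^ 2 + a ^ 2) * (m ^ 2 + b ^ 2)) :
    2 * m ^ 2 * c ≤ 2 * m ^ 4 + m ^ 2 * (a ^ 2 + b ^ 2) + a ^ 2 * b ^ 2 := by
  have hXpos : (0:ℝ) < 2 * m ^ 2 * c + (2 * m ^ 4 + m ^ 2 * (a ^ 2 + b ^ 2) + a ^ 2 * b ^ 2) := by positivity
  nlinarith [hc2, hXpos, sq_nonneg (m ^ 2 * (a ^ 2 + b ^ 2) + a ^ 2 * b ^ 2)]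

private lemma aux_e1 (m a b c : ℝ) (hm : 0 < m) (hc : 0 < c)
    (hs2 : a ^ 2 + b ^ 2 ≤ 2 * m ^ 2)
    (hc2 : c ^ 2 = (m ^ 2 + a ^ 2) * (m ^ 2 + b ^ 2)) :
    8 * m ^ 4 + 4 * m ^ 2 * (a ^ 2 + b ^ 2) - (a ^ 2 + b ^ 2) ^ 2 ≤ 8 * m ^ 2 * c := by
  have hsnn : (0:ℝ) ≤ a ^ 2 + b ^ 2 := by positivity
  have hY : (0:ℝ) ≤ 8 * m ^ 4 + 4 * m ^ 2 * (a ^ 2 + b ^ 2) - (a ^ 2 + b ^ 2) ^ 2 := by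
    nlinarith [hs2, hsnn, pow_pos hm 2]
  have hsq : (8 * m ^ 4 + 4 * m ^ 2 * (a ^ 2 + b ^ 2) - (a ^ 2 + b ^ 2) ^ 2) ^ 2 ≤ (8 * m ^ 2 * c) ^ 2 := by
    nlinarith [hc2,
      mul_nonneg (mul_nonneg (mul_nonneg hsnn hsnn) hsnn)
        (by nlinarith : (0:ℝ) ≤ 8 * m ^ 2 - (a ^ 2 + b ^ 2)),
      mul_nonneg (mul_nonneg (sq_nonneg (a * b)) (le_of_lt (pow_pos hm 2))) (le_of_lt (pow_pos hm 2))]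
  have h8 : (0:ℝ) < 8 * m ^ 2 * c := by positivity
  nlinarith [hsq, hY, h8]

private lemma aux_hclo (m a b c : ℝ) (hm : 0 < m) (hc : 0 < c)
    (hc2 : c ^ 2 = (m ^ 2 + a ^ 2) * (m ^ 2 + b ^ 2)) : m ^ 2 ≤ c := by
  nlinarith [sq_nonneg a, sq_nonneg b, sq_nonneg (c - m ^ 2), sq_nonneg (c + m ^ 2)]

private lemma aux_hNup (m a b t c ε : ℝ) (hm : 0 < m) (ha : 0 ≤ a) (hb : 0 ≤ b)
    (hε0 : 0 ≤ ε) (hε1 : ε ≤ 1)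
    (hε2 : ε ^ 2 ≤ 1)
    (hs : a ^ 2 + b ^ 2 ≤ 2 * ε ^ 2 * m ^ 2)
    (hab : a * b ≤ ε ^ 2 * m ^ 2)
    (ht1 : -(a * b) ≤ t) (ht2 : t ≤ a * b)
    (hc_lo : m ^ 2 ≤ c)
    (e1 : 8 * m ^ 4 + 4 * m ^ 2 * (a ^ 2 + b ^ 2) - (a ^ 2 + b ^ 2) ^ 2 ≤ 8 * m ^ 2 * c)
    (e2 : 2 * m ^ 2 * c ≤ 2 * m ^ 4 + m ^ 2 * (a ^ 2 + b ^ 2) + a ^ 2 * b ^ 2) :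
    2 * m ^ 2 * ((m ^ 2 + t) * (2 * m ^ 2) - c * (2 * m ^ 2 - (a ^ 2 + b ^ 2 - 2 * t))) ≤ 40 * ε ^ 4 * m ^ 6 := by
  have hm2 : (0:ℝ) < m ^ 2 := pow_pos hm 2
  have hsnn : (0:ℝ) ≤ a ^ 2 + b ^ 2 := by positivity
  have hst : 0 ≤ a ^ 2 + b ^ 2 - 2 * t := by nlinarith [sq_nonneg (a - b)]
  have hst2 : a ^ 2 + b ^ 2 - 2 * t ≤ 2 * (a ^ 2 + b ^ 2) := by nlinarith [sq_nonneg (a - b)]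
  have hq1 : a ^ 2 * b ^ 2 ≤ ε ^ 4 * m ^ 4 := by
    nlinarith [mul_le_mul hab hab (mul_nonneg ha hb) (by positivity : (0:ℝ) ≤ ε ^ 2 * m ^ 2)]
  have hq2 : m ^ 2 * (a ^ 2 + b ^ 2) ≤ 2 * ε ^ 2 * m ^ 4 := by
    nlinarith [mul_le_mul_of_nonneg_left hs (le_of_lt hm2)]
  have hq3 : (a ^ 2 + b ^ 2) ^ 2 ≤ 4 * ε ^ 4 * m ^ 4 := by
    nlinarith [mul_le_mul hs hs hsnn (by positivity : (0:ℝ) ≤ 2 * ε ^ 2 * m ^ 2)]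
  have hprod : 2 * m ^ 2 * ((c - m ^ 2) * (a ^ 2 + b ^ 2 - 2 * t)) ≤
      (m ^ 2 * (a ^ 2 + b ^ 2) + a ^ 2 * b ^ 2) * (a ^ 2 + b ^ 2 - 2 * t) := by
    have h := mul_le_mul_of_nonneg_right
      (show 2 * m ^ 2 * (c - m ^ 2) ≤ m ^ 2 * (a ^ 2 + b ^ 2) + a ^ 2 * b ^ 2 by linarith) hst
    nlinarith [h]
  have hq4 : (m ^ 2 * (a ^ 2 + b ^ 2) + a ^ 2 * b ^ 2) * (a ^ 2 + b ^ 2 - 2 * t) ≤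
      (m ^ 2 * (a ^ 2 + b ^ 2) + a ^ 2 * b ^ 2) * (2 * (a ^ 2 + b ^ 2)) :=
    mul_le_mul_of_nonneg_left hst2 (by positivity)
  have hq5 : (m ^ 2 * (a ^ 2 + b ^ 2) + a ^ 2 * b ^ 2) * (2 * (a ^ 2 + b ^ 2)) ≤
      (2 * ε ^ 2 * m ^ 4 + ε ^ 4 * m ^ 4) * (4 * ε ^ 2 * m ^ 2) :=
    mul_le_mul (by linarith) (by linarith) (by positivity) (by positivity)
  have hq7 : ε ^ 6 * m ^ 6 ≤ ε ^ 4 * m ^ 6 := by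
    nlinarith [mul_le_mul_of_nonneg_left hε2 (mul_nonneg (pow_nonneg hε0 4) (pow_nonneg (le_of_lt hm) 6))]
  have he1m : m ^ 2 * (8 * m ^ 4 + 4 * m ^ 2 * (a ^ 2 + b ^ 2) - (a ^ 2 + b ^ 2) ^ 2) ≤ m ^ 2 * (8 * m ^ 2 * c) :=
    mul_le_mul_of_nonneg_left e1 (le_of_lt hm2)
  have hq3m : m ^ 2 * (a ^ 2 + b ^ 2) ^ 2 ≤ m ^ 2 * (4 * ε ^ 4 * m ^ 4) :=
    mul_le_mul_of_nonneg_left hq3 (le_of_lt hm2)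
  have hε4m : (0:ℝ) ≤ ε ^ 4 * m ^ 6 := by positivity
  nlinarith [hprod, hq4, hq5, hq7, he1m, hq3m, hε4m]

private lemma aux_hNlo (m a b t c ε : ℝ) (hm : 0 < m) (ha : 0 ≤ a) (hb : 0 ≤ b)
    (hε0 : 0 ≤ ε)
    (hab : a * b ≤ ε ^ 2 * m ^ 2)
    (ht1 : -(a * b) ≤ t) (ht2 : t ≤ a * b)
    (hc_lo : m ^ 2 ≤ c)
    (e2 : 2 * m ^ 2 * c ≤ 2 * m ^ 4 + m ^ 2 * (a ^ 2 + b ^ 2) + a ^ 2 * b ^ 2) :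
    -(40 * ε ^ 4 * m ^ 6) ≤ 2 * m ^ 2 * ((m ^ 2 + t) * (2 * m ^ 2) - c * (2 * m ^ 2 - (a ^ 2 + b ^ 2 - 2 * t))) := by
  have hm2 : (0:ℝ) < m ^ 2 := pow_pos hm 2
  have hst : 0 ≤ a ^ 2 + b ^ 2 - 2 * t := by nlinarith [sq_nonneg (a - b)]
  have hcm : 0 ≤ c - m ^ 2 := by linarith
  have hprod0 : 0 ≤ (c - m ^ 2) * (a ^ 2 + b ^ 2 - 2 * t) := mul_nonneg hcm hst
  have hq1 : a ^ 2 * b ^ 2 ≤ ε ^ 4 * m ^ 4 := by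
    nlinarith [mul_le_mul hab hab (mul_nonneg ha hb) (by positivity : (0:ℝ) ≤ ε ^ 2 * m ^ 2)]
  have hq1m : m ^ 2 * (a ^ 2 * b ^ 2) ≤ m ^ 2 * (ε ^ 4 * m ^ 4) :=
    mul_le_mul_of_nonneg_left hq1 (le_of_lt hm2)
  have he2m : m ^ 2 * (2 * m ^ 2 * c) ≤ m ^ 2 * (2 * m ^ 4 + m ^ 2 * (a ^ 2 + b ^ 2) + a ^ 2 * b ^ 2) :=
    mul_le_mul_of_nonneg_left e2 (le_of_lt hm2)
  have hε4m : (0:ℝ) ≤ ε ^ 4 * m ^ 6 := by positivity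
  nlinarith [mul_nonneg (le_of_lt hm2) hprod0, he2m, hq1m, hε4m]

private lemma key_real (m a b t c ε : ℝ) (hm : 0 < m) (ha : 0 ≤ a) (hb : 0 ≤ b)
    (ha' : a ≤ ε * m) (hb' : b ≤ ε * m) (hε0 : 0 ≤ ε) (hε1 : ε ≤ 1)
    (ht : |t| ≤ a * b) (hc : 0 < c) (hc2 : c ^ 2 = (m ^ 2 + a ^ 2) * (m ^ 2 + b ^ 2)) :
    |(m ^ 2 + t) / c - (1 - (a ^ 2 + b ^ 2 - 2 * t) / (2 * m ^ 2))| ≤ 10 * ε ^ 4 := by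
  obtain ⟨ht1, ht2⟩ := abs_le.mp ht
  have hm2 : (0:ℝ) < m ^ 2 := pow_pos hm 2
  have hε2 : ε ^ 2 ≤ 1 := by nlinarith
  have hs : a ^ 2 + b ^ 2 ≤ 2 * ε ^ 2 * m ^ 2 := by nlinarith
  have hs2 : a ^ 2 + b ^ 2 ≤ 2 * m ^ 2 := by nlinarith [hs, hε2, hm2]
  have hab : a * b ≤ ε ^ 2 * m ^ 2 := by nlinarith
  have hc_lo := aux_hclo m a b c hm hc hc2
  have e2 := aux_e2 m a b c hm hc hc2
  have e1 := aux_e1 m a b c hm hc hs2 hc2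
  have hNup := aux_hNup m a b t c ε hm ha hb hε0 hε1 hε2 hs hab ht1 ht2 hc_lo e1 e2
  have hNlo := aux_hNlo m a b t c ε hm ha hb hε0 hab ht1 ht2 hc_lo e2
  have hN : |(m ^ 2 + t) * (2 * m ^ 2) - c * (2 * m ^ 2 - (a ^ 2 + b ^ 2 - 2 * t))| ≤ 20 * ε ^ 4 * m ^ 4 := by
    rw [abs_le]
    constructor
    · nlinarith [hNlo, hm2]
    · nlinarith [hNup, hm2]
  have heq : (m ^ 2 + t) / c - (1 - (a ^ 2 + b ^ 2 - 2 * t) / (2 * m ^ 2)) =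
      ((m ^ 2 + t) * (2 * m ^ 2) - c * (2 * m ^ 2 - (a ^ 2 + b ^ 2 - 2 * t))) / (2 * m ^ 2 * c) := by
    have h1 : c ≠ 0 := ne_of_gt hc
    have h2 : (m : ℝ) ≠ 0 := ne_of_gt hm
    field_simp
  rw [heq, abs_div, abs_of_pos (by positivity : (0:ℝ) < 2 * m ^ 2 * c),
    div_le_iff₀ (by positivity : (0:ℝ) < 2 * m ^ 2 * c)]
  have h1 : 20 * ε ^ 4 * m ^ 4 ≤ 10 * ε ^ 4 * (2 * m ^ 2 * c) := by
    have := mul_nonneg (mul_nonneg (pow_nonneg hε0 4) hm2.le) (sub_nonneg.mpr hc_lo)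
    nlinarith [this]
  linarith [hN]

theorem cosine_second_order_approximation
    {V : Type*} [NormedAddCommGroup V] [InnerProductSpace ℝ V]
    (μ δi δj : V) (hμ : μ ≠ 0) (ε : ℝ) (hε0 : 0 ≤ ε) (hε1 : ε ≤ 1)
    (hoi : ⟪μ, δi⟫ = 0) (hoj : ⟪μ, δj⟫ = 0)
    (hδi : ‖δi‖ ≤ ε * ‖μ‖) (hδj : ‖δj‖ ≤ ε * ‖μ‖) :
    |cosSim (μ + δi) (μ + δj) - (1 - ‖δi - δj‖ ^ 2 / (2 * ‖μ‖ ^ 2))| ≤ 10 * ε ^ 4 := by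
  have hm : 0 < ‖μ‖ := norm_pos_iff.mpr hμ
  have hA2 : ‖μ + δi‖ ^ 2 = ‖μ‖ ^ 2 + ‖δi‖ ^ 2 := by
    rw [norm_add_sq_real, hoi]; ring
  have hB2 : ‖μ + δj‖ ^ 2 = ‖μ‖ ^ 2 + ‖δj‖ ^ 2 := by
    rw [norm_add_sq_real, hoj]; ring
  have hoi' : ⟪δi, μ⟫ = (0:ℝ) := by rw [real_inner_comm, hoi]
  have hinner : ⟪μ + δi, μ + δj⟫ = ‖μ‖ ^ 2 + ⟪δi, δj⟫ := by
    rw [inner_add_left, inner_add_right, inner_add_right, hoj, hoi',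
      real_inner_self_eq_norm_sq]
    ring
  have hd2 : ‖δi - δj‖ ^ 2 = ‖δi‖ ^ 2 + ‖δj‖ ^ 2 - 2 * ⟪δi, δj⟫ := by
    rw [norm_sub_sq_real]; ring
  have hCS : |⟪δi, δj⟫| ≤ ‖δi‖ * ‖δj‖ := abs_real_inner_le_norm δi δj
  have hA : 0 < ‖μ + δi‖ := by nlinarith [norm_nonneg (μ + δi), hA2, sq_nonneg ‖δi‖]
  have hB : 0 < ‖μ + δj‖ := by nlinarith [norm_nonneg (μ + δj), hB2, sq_nonneg ‖δj‖]
  have hc2 : (‖μ + δi‖ * ‖μ + δj‖) ^ 2 = (‖μ‖ ^ 2 + ‖δi‖ ^ 2) * (‖μ‖ ^ 2 + ‖δj‖ ^ 2) := by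
    rw [mul_pow, hA2, hB2]
  have := key_real ‖μ‖ ‖δi‖ ‖δj‖ ⟪δi, δj⟫ (‖μ + δi‖ * ‖μ + δj‖) ε hm (norm_nonneg δi)
    (norm_nonneg δj) hδi hδj hε0 hε1 hCS (mul_pos hA hB) hc2
  rw [cosSim, hinner, hd2]
  convert this using 3
end

section
/- Let V be a real inner product space, let μ ∈ V be nonzero, let 0 ≤ ε < 1, let N ≥ 2, and let δ₁, …, δ_N ∈ V each have norm at most ε‖μ‖; set xᵢ = μ + δᵢ. Define the raw-cosine redundancy score R(i) = (1/(N−1))·Σ_{j≠i} cos(xᵢ, xⱼ). Then for every i, 1 − (4ε + 2ε²)/(1 − ε)² ≤ R(i) ≤ 1, and for all i, k, |R(i) − R(k)| ≤ (4ε + 2ε²)/(1 − ε)². Hence in an anisotropic space, redundancy scores computed from raw cosine similarity are uniformly close to 1 and cannot discriminate between samples by more than this margin. -/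
open RealInnerProductSpace

theorem raw_cosine_redundancy_scores_uniformly_near_one
    {V : Type*} [NormedAddCommGroup V] [InnerProductSpace ℝ V]
    (μ : V) (hμ : μ ≠ 0) (ε : ℝ) (hε0 : 0 ≤ ε) (hε1 : ε < 1)
    (N : ℕ) (hN : 2 ≤ N) (δ : Fin N → V) (hδ : ∀ i, ‖δ i‖ ≤ ε * ‖μ‖)
    (x : Fin N → V) (hx : ∀ i, x i = μ + δ i)
    (R : Fin N → ℝ)
    (hR : ∀ i, R i = (1 / ((N : ℝ) - 1)) * ∑ j ∈ Finset.univ.erase i, cosSim (x i) (x j)) :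
    (∀ i, 1 - (4 * ε + 2 * ε ^ 2) / (1 - ε) ^ 2 ≤ R i ∧ R i ≤ 1) ∧
    (∀ i k, |R i - R k| ≤ (4 * ε + 2 * ε ^ 2) / (1 - ε) ^ 2) := by
  have hm : (0:ℝ) < ‖μ‖ := norm_pos_iff.mpr hμ
  set m := ‖μ‖ with hmdef
  set B := (4 * ε + 2 * ε ^ 2) / (1 - ε) ^ 2 with hBdef
  have h1ε : (0:ℝ) < 1 - ε := by linarith
  have hB0 : 0 ≤ B := div_nonneg (by nlinarith) (by positivity)
  have hBm : B * (1 - ε) ^ 2 = 4 * ε + 2 * ε ^ 2 :=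
    div_mul_cancel₀ _ (by positivity)
  have hlo : ∀ i, (1 - ε) * m ≤ ‖x i‖ := by
    intro i
    rw [hx i]
    have h := norm_sub_norm_le μ (-(δ i))
    simp only [sub_neg_eq_add, norm_neg] at h
    have h2 := hδ i
    linarith
  have hhi : ∀ i, ‖x i‖ ≤ (1 + ε) * m := by
    intro i
    rw [hx i]
    have h := norm_add_le μ (δ i)
    have h2 := hδ i
    linarith
  have hip : ∀ i j, (1 - 2*ε - ε^2) * m^2 ≤ ⟪x i, x j⟫ := by
    intro i j
    rw [hx i, hx j, inner_add_left, inner_add_right, inner_add_right,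
      real_inner_self_eq_norm_sq]
    have h1 := abs_real_inner_le_norm μ (δ j)
    have h2 := abs_real_inner_le_norm (δ i) μ
    have h3 := abs_real_inner_le_norm (δ i) (δ j)
    rw [abs_le] at h1 h2 h3
    have hδi := hδ i
    have hδj := hδ j
    have hni : (0:ℝ) ≤ ‖δ i‖ := norm_nonneg _
    have hnj : (0:ℝ) ≤ ‖δ j‖ := norm_nonneg _
    nlinarith [h1.1, h2.1, h3.1, mul_le_mul hδi hδj hnj (by positivity)]
  have hxpos : ∀ i, (0:ℝ) < ‖x i‖ := fun i =>
    lt_of_lt_of_le (mul_pos h1ε hm) (hlo i)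
  have hcos : ∀ i j, 1 - B ≤ cosSim (x i) (x j) ∧ cosSim (x i) (x j) ≤ 1 := by
    intro i j
    have hD : 0 < ‖x i‖ * ‖x j‖ := mul_pos (hxpos i) (hxpos j)
    constructor
    · unfold cosSim
      rw [le_div_iff₀ hD]
      have hDhi : ‖x i‖ * ‖x j‖ ≤ (1 + ε) * m * ((1 + ε) * m) :=
        mul_le_mul (hhi i) (hhi j) (norm_nonneg _) (by positivity)
      have hDlo : (1 - ε) * m * ((1 - ε) * m) ≤ ‖x i‖ * ‖x j‖ :=
        mul_le_mul (hlo i) (hlo j) (by positivity) (norm_nonneg _)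
      have hipij := hip i j
      nlinarith [mul_le_mul_of_nonneg_left hDlo hB0]
    · unfold cosSim
      rw [div_le_one hD]
      exact real_inner_le_norm _ _
  have hN1 : (0:ℝ) < (N:ℝ) - 1 := by
    have : (2:ℝ) ≤ (N:ℝ) := by exact_mod_cast hN
    linarith
  have hcard : ∀ i : Fin N, ((Finset.univ.erase i).card : ℝ) = (N:ℝ) - 1 := by
    intro i
    rw [Finset.card_erase_of_mem (Finset.mem_univ i), Finset.card_univ, Fintype.card_fin,
      Nat.cast_sub (by omega), Nat.cast_one]
  have hRbound : ∀ i, 1 - B ≤ R i ∧ R i ≤ 1 := by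
    intro i
    have hsle : ∑ j ∈ Finset.univ.erase i, cosSim (x i) (x j) ≤ (N:ℝ) - 1 := by
      calc ∑ j ∈ Finset.univ.erase i, cosSim (x i) (x j)
          ≤ ∑ _j ∈ Finset.univ.erase i, (1:ℝ) :=
            Finset.sum_le_sum (fun j _ => (hcos i j).2)
        _ = ((Finset.univ.erase i).card : ℝ) := by simp
        _ = (N:ℝ) - 1 := hcard i
    have hsge : ((N:ℝ) - 1) * (1 - B) ≤ ∑ j ∈ Finset.univ.erase i, cosSim (x i) (x j) := by
      calc ((N:ℝ) - 1) * (1 - B) = ((Finset.univ.erase i).card : ℝ) * (1 - B) := by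
            rw [hcard i]
        _ = ∑ _j ∈ Finset.univ.erase i, (1 - B) := by
            rw [Finset.sum_const, nsmul_eq_mul]
        _ ≤ ∑ j ∈ Finset.univ.erase i, cosSim (x i) (x j) :=
            Finset.sum_le_sum (fun j _ => (hcos i j).1)
    rw [hR i, one_div, ← div_eq_inv_mul]
    constructor
    · rw [le_div_iff₀ hN1]
      nlinarith
    · rw [div_le_one hN1]
      exact hsle
  refine ⟨hRbound, fun i k => ?_⟩
  have hi := hRbound i
  have hk := hRbound k
  rw [abs_le]
  constructor <;> [linarith [hi.1, hk.2]; linarith [hi.2, hk.1]]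
end
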